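/- Let f be a radio-k-labeling of C_n with k ≥ diam(C_n), where n and k have different parities, and let x_0,…,x_{n−1} order the vertices by increasing label. If for some i ∈ [0, n−3], f(x_{i+2}) − f(x_i) = (3k − n + 3)/2, then d(x_i, x_{i+2}) = (n − k − 1)/2. -/

import Mathlib

/-- Distance between two vertices of the cycle `C_n` (vertices are `Fin n`). -/
def cycleDist (n : ℕ) (u v : Fin n) : ℕ := min (v - u).val (u - v).val

/-- A radio-`k`-labeling of the cycle `C_n`. -/
def IsRadioLabeling (n k : ℕ) (f : Fin n → ℕ) : Prop :=
  ∀ u v : Fin n, u ≠ v → (k : ℤ) + 1 - cycleDist n u v ≤ |(f u : ℤ) - (f v : ℤ)|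

/-- The span of a labeling: largest label minus smallest label. -/
def spanOf (n : ℕ) (f : Fin n → ℕ) : ℕ :=
  Finset.univ.sup fun u => Finset.univ.sup fun v => f u - f v

/-- The radio-`k`-number of `C_n`: minimum span over all radio-`k`-labelings. -/
noncomputable def rn (n k : ℕ) : ℕ :=
  sInf {s | ∃ f : Fin n → ℕ, IsRadioLabeling n k f ∧ spanOf n f = s}

lemma neg_val_aux (n : ℕ) [NeZero n] (x : Fin n) (hx : x ≠ 0) : x.val + (-x).val = n := by
  have hnx : -x ≠ 0 := by simpa using hx
  have h1 : x.val ≠ 0 := fun h => hx (Fin.ext (by simpa using h))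
  have h2 : (-x).val ≠ 0 := fun h => hnx (Fin.ext (by simpa using h))
  have hv : (x.val + (-x).val) % n = 0 := by
    have e : x + -x = 0 := by abel
    rw [← Fin.val_add, e]; simp
  have hdvd : n ∣ x.val + (-x).val := Nat.dvd_of_mod_eq_zero hv
  have hb1 : x.val < n := x.isLt
  have hb2 : (-x).val < n := (-x).isLt
  have hle : n ≤ x.val + (-x).val := Nat.le_of_dvd (by omega) hdvd
  have h0 : x.val + (-x).val - n = 0 :=
    Nat.eq_zero_of_dvd_of_lt (Nat.dvd_sub hdvd dvd_rfl) (by omega)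
  omega

lemma cycle_sum_le (n : ℕ) (u v w : Fin n) (huv : u ≠ v) (hvw : v ≠ w) (huw : u ≠ w) :
    cycleDist n u v + cycleDist n v w + cycleDist n u w ≤ n := by
  have hn : 0 < n := u.pos
  haveI : NeZero n := ⟨hn.ne'⟩
  have h1 : v - u ≠ 0 := sub_ne_zero.mpr (Ne.symm huv)
  have h2 : w - v ≠ 0 := sub_ne_zero.mpr (Ne.symm hvw)
  have h3 : w - u ≠ 0 := sub_ne_zero.mpr (Ne.symm huw)
  have p1 := neg_val_aux n _ h1
  have p2 := neg_val_aux n _ h2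
  have p3 := neg_val_aux n _ h3
  rw [show -(v - u) = u - v by abel] at p1
  rw [show -(w - v) = v - w by abel] at p2
  rw [show -(w - u) = u - w by abel] at p3
  have v1 : (v - u).val ≠ 0 := fun h => h1 (Fin.ext (by simpa using h))
  have v2 : (w - v).val ≠ 0 := fun h => h2 (Fin.ext (by simpa using h))
  have v3 : (w - u).val ≠ 0 := fun h => h3 (Fin.ext (by simpa using h))
  have hv : ((v - u).val + (w - v).val + (u - w).val) % n = 0 := by
    have e : (v - u) + (w - v) + (u - w) = 0 := by abel
    rw [← Nat.mod_add_mod, ← Fin.val_add, ← Fin.val_add, e]; simp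
  set S := (v - u).val + (w - v).val + (u - w).val with hS
  have hdvd : n ∣ S := Nat.dvd_of_mod_eq_zero hv
  have b1 : (v - u).val < n := (v - u).isLt
  have b2 : (w - v).val < n := (w - v).isLt
  have b3 : (u - w).val < n := (u - w).isLt
  have hle : n ≤ S := Nat.le_of_dvd (by omega) hdvd
  have hcase : S = n ∨ S = 2 * n := by
    by_cases hlt : S < 2 * n
    · left
      have h0 := Nat.eq_zero_of_dvd_of_lt (Nat.dvd_sub hdvd dvd_rfl) (by omega)
      omega
    · right
      have hd2 : n ∣ S - 2 * n := Nat.dvd_sub hdvd (dvd_mul_left n 2)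
      have h0 := Nat.eq_zero_of_dvd_of_lt hd2 (by omega)
      omega
  simp only [cycleDist]
  omega

/-- different parities of `n` and `k`; if three consecutive vertices in
label order have total label gap exactly `Φ(n,k) = (3k-n+3)/2`, then
`d(x_i, x_{i+2}) = (n-k-1)/2`. -/
theorem stmt12 (n k : ℕ) (hk : n / 2 ≤ k) (hpar : n % 2 ≠ k % 2)
    (f : Fin n → ℕ) (hf : IsRadioLabeling n k f)
    (x : Fin n → Fin n) (hx : Function.Bijective x)
    (hmono : StrictMono fun i => f (x i))
    (i : ℕ) (hi : i + 2 < n)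
    (heq : (f (x ⟨i + 2, hi⟩) : ℤ) - (f (x ⟨i, by omega⟩) : ℤ) = (3 * k - n + 3) / 2) :
    (cycleDist n (x ⟨i, by omega⟩) (x ⟨i + 2, hi⟩) : ℤ) = (n - k - 1) / 2 := by
  have hi0 : i < n := by omega
  have hi1 : i + 1 < n := by omega
  set a : Fin n := x ⟨i, by omega⟩ with ha
  set b : Fin n := x ⟨i + 1, hi1⟩ with hb
  set c : Fin n := x ⟨i + 2, hi⟩ with hc
  have hab : a ≠ b := fun h => by have := hx.injective h; simp [Fin.ext_iff] at this
  have hbc : b ≠ c := fun h => by have := hx.injective h; simp [Fin.ext_iff] at this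
  have hac : a ≠ c := fun h => by have := hx.injective h; simp [Fin.ext_iff] at this
  have m1 : (f a : ℤ) < f b := by
    exact_mod_cast hmono (show (⟨i, hi0⟩ : Fin n) < ⟨i + 1, hi1⟩ by simp)
  have m2 : (f b : ℤ) < f c := by
    exact_mod_cast hmono (show (⟨i + 1, hi1⟩ : Fin n) < ⟨i + 2, hi⟩ by simp)
  have r1 := hf a b hab
  have r2 := hf b c hbc
  have r3 := hf a c hac
  rw [abs_sub_comm, abs_of_pos (by linarith)] at r1 r2 r3
  have hsum := cycle_sum_le n a b c hab hbc hac
  haveI : NeZero n := ⟨by omega⟩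
  have hca : c - a ≠ 0 := sub_ne_zero.mpr (Ne.symm hac)
  have hac' : a - c ≠ 0 := sub_ne_zero.mpr hac
  have w1 : (c - a).val ≠ 0 := fun h => hca (Fin.ext (by simpa using h))
  have w2 : (a - c).val ≠ 0 := fun h => hac' (Fin.ext (by simpa using h))
  have hpos : 0 < cycleDist n a c := by
    simp only [cycleDist]; omega
  omega
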